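/- Let (B, I, J) be a stable framed quiver representation (no nonzero B-invariant graded subspace contained in ker J). Then the stabilizer of (B, I, J) in the group G_V = ∏_i GL(V_i) acting by conjugation (g·(B,I,J) = (gBg⁻¹, gI, Jg⁻¹)) is trivial. -/

import Mathlib

/-!
The image of `g - 1` is a graded subspace of `V`; it is `B`-invariant because `g` commutes with
every `B e`, and it lies in `ker J` because `J g = J`. Stability therefore forces it to vanish,
that is, `g = 1`.
-/

namespace LinearMap

variable {R M N P : Type*} [Ring R] [AddCommGroup M] [Module R M] [AddCommGroup N] [Module R N]
  [AddCommGroup P] [Module R P]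

theorem map_range_sub_id_le_of_comp_eq {φ : M →ₗ[R] N} {a : M →ₗ[R] M} {b : N →ₗ[R] N}
    (h : b ∘ₗ φ = φ ∘ₗ a) : (range (a - id)).map φ ≤ range (b - id) := by
  have hφ : φ ∘ₗ (a - id) = (b - id) ∘ₗ φ := by rw [comp_sub, sub_comp, ← h, comp_id, id_comp]
  rw [← range_comp, hφ]
  exact range_comp_le_range _ _

theorem range_sub_id_le_ker_of_comp_eq {a : M →ₗ[R] M} {f : M →ₗ[R] P} (h : f ∘ₗ a = f) :
    range (a - id) ≤ ker f := by
  rw [range_le_ker_iff, comp_sub, h, comp_id, sub_self]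

end LinearMap

theorem stable_framed_rep_stabilizer_trivial_general {K ι E : Type*} [Field K]
    (s t : E → ι) {V W : ι → Type*}
    [∀ i, AddCommGroup (V i)] [∀ i, Module K (V i)]
    [∀ i, AddCommGroup (W i)] [∀ i, Module K (W i)]
    (B : ∀ e, V (s e) →ₗ[K] V (t e)) (J : ∀ i, V i →ₗ[K] W i)
    (hstable : ∀ U : ∀ i, Submodule K (V i),
      (∀ e, (U (s e)).map (B e) ≤ U (t e)) →
      (∀ i, U i ≤ LinearMap.ker (J i)) → ∀ i, U i = ⊥)
    (g : ∀ i, V i ≃ₗ[K] V i)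
    (hB : ∀ e, ((g (t e) : V (t e) →ₗ[K] V (t e)) ∘ₗ B e) ∘ₗ
        ((g (s e)).symm : V (s e) →ₗ[K] V (s e)) = B e)
    (hJ : ∀ i, J i ∘ₗ ((g i).symm : V i →ₗ[K] V i) = J i) :
    ∀ i, g i = LinearEquiv.refl K (V i) := by
  have hgB e : (g (t e) : V (t e) →ₗ[K] V (t e)) ∘ₗ B e = B e ∘ₗ g (s e) :=
    (LinearEquiv.comp_toLinearMap_symm_eq _ _).1 (hB e)
  have hJg i : J i ∘ₗ g i = J i := ((LinearEquiv.comp_toLinearMap_symm_eq _ _).1 (hJ i)).symm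
  have hfixed := hstable (fun i ↦ LinearMap.range ((g i : V i →ₗ[K] V i) - LinearMap.id))
    (fun e ↦ LinearMap.map_range_sub_id_le_of_comp_eq (hgB e))
    (fun i ↦ LinearMap.range_sub_id_le_ker_of_comp_eq (hJg i))
  exact fun i ↦
    LinearEquiv.toLinearMap_injective (sub_eq_zero.1 (LinearMap.range_eq_bot.1 (hfixed i)))

/-- For a stable framed quiver representation `(B, I, J)` (no nonzero `B`-invariant
graded subspace contained in `ker J`), the stabilizer in `G_V = ∏ᵢ GL(Vᵢ)` acting by
`g·(B,I,J) = (gBg⁻¹, gI, Jg⁻¹)` is trivial. -/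
theorem stable_framed_rep_stabilizer_trivial {K ι E : Type*} [Field K]
    (s t : E → ι) {V W : ι → Type*}
    [∀ i, AddCommGroup (V i)] [∀ i, Module K (V i)]
    [∀ i, AddCommGroup (W i)] [∀ i, Module K (W i)]
    (B : ∀ e, V (s e) →ₗ[K] V (t e)) (Imap : ∀ i, W i →ₗ[K] V i) (J : ∀ i, V i →ₗ[K] W i)
    (hstable : ∀ U : ∀ i, Submodule K (V i),
      (∀ e, (U (s e)).map (B e) ≤ U (t e)) →
      (∀ i, U i ≤ LinearMap.ker (J i)) → ∀ i, U i = ⊥)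
    (g : ∀ i, V i ≃ₗ[K] V i)
    (hB : ∀ e, ((g (t e) : V (t e) →ₗ[K] V (t e)) ∘ₗ B e) ∘ₗ
        ((g (s e)).symm : V (s e) →ₗ[K] V (s e)) = B e)
    (hI : ∀ i, (g i : V i →ₗ[K] V i) ∘ₗ Imap i = Imap i)
    (hJ : ∀ i, J i ∘ₗ ((g i).symm : V i →ₗ[K] V i) = J i) :
    ∀ i, g i = LinearEquiv.refl K (V i) :=
  stable_framed_rep_stabilizer_trivial_general s t B J hstable g hB hJ
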